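/- arXiv:1407.3910 — 3 statements merged into one kernel-verified Lean document; each statement's English description precedes it below -/
import Mathlib

section
/- Let Φ be a closed convex set in ℝᵐ and let P(x) denote the projection of x onto Φ. If x(t) is a continuously differentiable trajectory satisfying, for all t ≥ 1, the Blackwell condition (x(t) − P(x(t)))ᵀ (x(t) − P(x(t)) + t·x′(t)) ≤ 0, then dist(x(t), Φ)² ≤ dist(x(1), Φ)²/t² for all t ≥ 1; in particular dist(x(t), Φ) → 0 as t → ∞. -/
open scoped RealInnerProductSpace
open Set Filter Topology Metric

/-!
The Lyapunov function `V t = t ^ 2 * dist (x t, Φ) ^ 2` is nonincreasing on `[1, ∞)`. It need not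
be differentiable, but at each `t` it is touched from above by `z ↦ z ^ 2 * ‖x z - P (x t)‖ ^ 2`,
whose derivative at `t` is `2 t ⟪x t - P (x t), x t - P (x t) + t • x' t⟫ ≤ 0` by the Blackwell
condition. A continuous function touched from above at every point by a majorant with
nonpositive right derivative is nonincreasing, so `t ^ 2 * dist (x t, Φ) ^ 2 ≤ dist (x 1, Φ) ^ 2`.
-/

theorem le_left_of_touching_majorant_deriv_nonpos {g : ℝ → ℝ} {a b : ℝ} (hab : a ≤ b)
    (hg : ContinuousOn g (Icc a b))
    (hmaj : ∀ t ∈ Ico a b, ∃ h : ℝ → ℝ, ∃ h' ≤ (0 : ℝ),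
      HasDerivWithinAt h h' (Ici t) t ∧ h t = g t ∧ ∀ᶠ z in 𝓝[>] t, g z ≤ h z) :
    g b ≤ g a := by
  refine image_le_of_liminf_slope_right_le_deriv_boundary (B := fun _ => g a) (B' := fun _ => 0)
    hg le_rfl continuousOn_const (fun t _ => hasDerivWithinAt_const t _ _) ?_ (right_mem_Icc.2 hab)
  intro t ht r hr
  obtain ⟨h, h', hh', hderiv, hht, hle⟩ := hmaj t ht
  have hslope : ∀ᶠ z in 𝓝[>] t, slope h t z < r := by
    simpa only [Ici_sdiff_left] using hderiv.limsup_slope_le (hh'.trans_lt hr)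
  refine (((hslope.and hle).and self_mem_nhdsWithin).mono ?_).frequently
  rintro z ⟨⟨hhz, hgz⟩, htz : t < z⟩
  refine lt_of_le_of_lt ?_ hhz
  rw [slope_def_field, slope_def_field, hht]
  gcongr

theorem infDist_eq_dist_of_forall_dist_le {α : Type*} [PseudoMetricSpace α] {s : Set α}
    {y p : α} (hp : p ∈ s) (h : ∀ z ∈ s, dist y p ≤ dist y z) : infDist y s = dist y p :=
  le_antisymm (infDist_le_dist_of_mem hp) ((le_infDist ⟨p, hp⟩).2 h)

section InnerProductSpace

variable {E : Type*} [NormedAddCommGroup E] [InnerProductSpace ℝ E]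

theorem HasDerivAt.sq_mul_norm_sub_sq {x : ℝ → E} {v : E} {t : ℝ} (hx : HasDerivAt x v t)
    (p : E) :
    HasDerivAt (fun z => z ^ 2 * ‖x z - p‖ ^ 2) (2 * t * ⟪x t - p, x t - p + t • v⟫) t := by
  refine ((hasDerivAt_pow 2 t).mul (hx.sub_const p).norm_sq).congr_deriv ?_
  rw [inner_add_right, real_inner_smul_right, real_inner_self_eq_norm_sq]
  push_cast
  ring

theorem antitoneOn_sq_mul_infDist_sq {s : Set E} {P : E → E} (hPmem : ∀ y, P y ∈ s)
    (hPproj : ∀ y, ∀ z ∈ s, dist y (P y) ≤ dist y z) {x x' : ℝ → E} {c : ℝ} (hc : 0 ≤ c)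
    (hderiv : ∀ t ≥ c, HasDerivAt x (x' t) t)
    (hB : ∀ t ≥ c, ⟪x t - P (x t), x t - P (x t) + t • x' t⟫ ≤ 0) :
    AntitoneOn (fun t => t ^ 2 * infDist (x t) s ^ 2) (Ici c) := by
  intro a (ha : c ≤ a) b _ hab
  have hinf : ∀ y, infDist y s = ‖y - P y‖ := fun y => by
    rw [infDist_eq_dist_of_forall_dist_le (hPmem y) (hPproj y), dist_eq_norm]
  refine le_left_of_touching_majorant_deriv_nonpos (g := fun t => t ^ 2 * infDist (x t) s ^ 2)
    hab ?_ fun t ht => ?_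
  · have hx : ContinuousOn x (Icc a b) := fun t ht =>
      (hderiv t (ha.trans ht.1)).continuousAt.continuousWithinAt
    exact (continuousOn_pow 2).mul (((continuous_infDist_pt s).comp_continuousOn hx).pow 2)
  · have hct : c ≤ t := ha.trans ht.1
    refine ⟨fun z => z ^ 2 * ‖x z - P (x t)‖ ^ 2, _, ?_,
      ((hderiv t hct).sq_mul_norm_sub_sq _).hasDerivWithinAt, by simp only [hinf], ?_⟩
    · exact mul_nonpos_of_nonneg_of_nonpos (by linarith) (hB t hct)
    · refine Eventually.of_forall fun z => ?_
      have hdist : infDist (x z) s ≤ ‖x z - P (x t)‖ := by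
        simpa only [dist_eq_norm] using infDist_le_dist_of_mem (hPmem (x t))
      dsimp only
      gcongr
      exact infDist_nonneg

end InnerProductSpace

theorem blackwell_approachability_general
    {m : ℕ} (Φ : Set (EuclideanSpace ℝ (Fin m)))
    (P : EuclideanSpace ℝ (Fin m) → EuclideanSpace ℝ (Fin m))
    (hPmem : ∀ x, P x ∈ Φ)
    (hPproj : ∀ x, ∀ z ∈ Φ, dist x (P x) ≤ dist x z)
    (x x' : ℝ → EuclideanSpace ℝ (Fin m))
    (hderiv : ∀ t ≥ (1 : ℝ), HasDerivAt x (x' t) t)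
    (hB : ∀ t ≥ (1 : ℝ), ⟪x t - P (x t), (x t - P (x t)) + t • x' t⟫ ≤ 0) :
    (∀ t ≥ (1 : ℝ), (Metric.infDist (x t) Φ) ^ 2 ≤ (Metric.infDist (x 1) Φ) ^ 2 / t ^ 2) ∧
    Filter.Tendsto (fun t => Metric.infDist (x t) Φ) Filter.atTop (nhds 0) := by
  have hdecay_sq : ∀ t ≥ (1 : ℝ), (t * infDist (x t) Φ) ^ 2 ≤ infDist (x 1) Φ ^ 2 :=
    fun t ht => by
      simpa only [one_pow, one_mul, mul_pow] using
        antitoneOn_sq_mul_infDist_sq hPmem hPproj zero_le_one hderiv hB self_mem_Ici ht ht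
  have hdecay : ∀ t ≥ (1 : ℝ), t * infDist (x t) Φ ≤ infDist (x 1) Φ := fun t ht =>
    (pow_le_pow_iff_left₀ (mul_nonneg (by linarith) infDist_nonneg) infDist_nonneg
      two_ne_zero).1 (hdecay_sq t ht)
  refine ⟨fun t ht => ?_, ?_⟩
  · rw [le_div_iff₀ (by positivity), mul_comm, ← mul_pow]
    exact hdecay_sq t ht
  · refine squeeze_zero' (Eventually.of_forall fun t => infDist_nonneg) ?_
      ((tendsto_const_nhds (x := infDist (x 1) Φ)).div_atTop tendsto_id)
    filter_upwards [eventually_ge_atTop 1] with t ht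
    rw [id, le_div_iff₀ (by linarith), mul_comm]
    exact hdecay t ht

/-- Continuous-time Blackwell approachability principle. -/
theorem blackwell_approachability
    {m : ℕ} (Φ : Set (EuclideanSpace ℝ (Fin m)))
    (hne : Φ.Nonempty) (hcl : IsClosed Φ) (hconv : Convex ℝ Φ)
    (P : EuclideanSpace ℝ (Fin m) → EuclideanSpace ℝ (Fin m))
    (hPmem : ∀ x, P x ∈ Φ)
    (hPproj : ∀ x, ∀ z ∈ Φ, dist x (P x) ≤ dist x z)
    (x x' : ℝ → EuclideanSpace ℝ (Fin m))
    (hderiv : ∀ t ≥ (1 : ℝ), HasDerivAt x (x' t) t)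
    (hcont : Continuous x')
    (hB : ∀ t ≥ (1 : ℝ), ⟪x t - P (x t), (x t - P (x t)) + t • x' t⟫ ≤ 0) :
    (∀ t ≥ (1 : ℝ), (Metric.infDist (x t) Φ) ^ 2 ≤ (Metric.infDist (x 1) Φ) ^ 2 / t ^ 2) ∧
    Filter.Tendsto (fun t => Metric.infDist (x t) Φ) Filter.atTop (nhds 0) :=
  blackwell_approachability_general Φ P hPmem hPproj x x' hderiv hB
end

section
/- Fix a target y ∈ ℝᵐ, a finite action set A, q ∈ Δ(A), and u(l,q) = Σ_k q_k M(l,k) with y in the convex hull of {u(l,q) : l ∈ A}. Suppose x : [0,∞) → ℝᵐ is differentiable and satisfies x′(s) = u(σ(x(s)), q) − x(s) where σ is any measurable strategy with ⟨x − y, u(σ(x), q) − y⟩ ≤ 0 for all x. Then ‖x(s) − y‖ ≤ e^{−s}·‖x(0) − y‖ for all s ≥ 0. -/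
/-!
The squared distance to the target is a Lyapunov function: along the flow its derivative is
`2⟪x - y, u(σ x) - x⟫ = 2⟪x - y, u(σ x) - y⟫ - 2‖x - y‖² ≤ -2‖x - y‖²`, so `e^{2s} ‖x(s) - y‖²`
is nonincreasing on `[0, ∞)`.
-/

open scoped RealInnerProductSpace

section Dissipative

variable {E : Type*} [NormedAddCommGroup E] [InnerProductSpace ℝ E]

theorem antitoneOn_exp_mul_norm_sq_of_inner_deriv_le {c : ℝ} {z z' : ℝ → E}
    (hz : ∀ s ≥ (0 : ℝ), HasDerivAt z (z' s) s)
    (hdiss : ∀ s ≥ (0 : ℝ), ⟪z s, z' s⟫ ≤ -c * ‖z s‖ ^ 2) :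
    AntitoneOn (fun s => Real.exp (2 * c * s) * ‖z s‖ ^ 2) (Set.Ici 0) := by
  have hderiv : ∀ s ≥ (0 : ℝ), HasDerivAt (fun s => Real.exp (2 * c * s) * ‖z s‖ ^ 2)
      (Real.exp (2 * c * s) * (2 * c) * ‖z s‖ ^ 2 + Real.exp (2 * c * s) * (2 * ⟪z s, z' s⟫))
      s := fun s hs =>
    (((hasDerivAt_id' s).const_mul (2 * c)).exp.mul (hz s hs).norm_sq).congr_deriv (by ring)
  refine antitoneOn_of_hasDerivWithinAt_nonpos (convex_Ici 0)
    (fun s hs => (hderiv s hs).continuousAt.continuousWithinAt)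
    (fun s hs => (hderiv s (interior_subset hs)).hasDerivWithinAt) fun s hs => ?_
  calc Real.exp (2 * c * s) * (2 * c) * ‖z s‖ ^ 2 + Real.exp (2 * c * s) * (2 * ⟪z s, z' s⟫)
      = 2 * Real.exp (2 * c * s) * (⟪z s, z' s⟫ + c * ‖z s‖ ^ 2) := by ring
    _ ≤ 0 := mul_nonpos_of_nonneg_of_nonpos (by positivity)
        (by linarith [hdiss s (interior_subset hs)])

theorem norm_le_exp_mul_norm_of_inner_deriv_le {c : ℝ} {z z' : ℝ → E}
    (hz : ∀ s ≥ (0 : ℝ), HasDerivAt z (z' s) s)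
    (hdiss : ∀ s ≥ (0 : ℝ), ⟪z s, z' s⟫ ≤ -c * ‖z s‖ ^ 2) :
    ∀ s ≥ (0 : ℝ), ‖z s‖ ≤ Real.exp (-(c * s)) * ‖z 0‖ := by
  intro s hs
  have hV := antitoneOn_exp_mul_norm_sq_of_inner_deriv_le hz hdiss Set.self_mem_Ici hs hs
  simp only [mul_zero, Real.exp_zero, one_mul] at hV
  have hscaled : Real.exp (c * s) * ‖z s‖ ≤ ‖z 0‖ := by
    refine (pow_le_pow_iff_left₀ (by positivity) (norm_nonneg _) two_ne_zero).mp ?_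
    calc (Real.exp (c * s) * ‖z s‖) ^ 2 = Real.exp (2 * c * s) * ‖z s‖ ^ 2 := by
          rw [mul_pow, ← Real.exp_nat_mul]; ring_nf
      _ ≤ ‖z 0‖ ^ 2 := hV
  calc ‖z s‖ = Real.exp (-(c * s)) * (Real.exp (c * s) * ‖z s‖) := by
        rw [← mul_assoc, ← Real.exp_add, neg_add_cancel, Real.exp_zero, one_mul]
    _ ≤ Real.exp (-(c * s)) * ‖z 0‖ := by gcongr

end Dissipative

theorem microscopic_dynamics_converges_general
    {m : ℕ} (A : Type*)
    (u : A → EuclideanSpace ℝ (Fin m))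
    (y : EuclideanSpace ℝ (Fin m))
    (σ : EuclideanSpace ℝ (Fin m) → A)
    (hσ : ∀ x : EuclideanSpace ℝ (Fin m), ⟪x - y, u (σ x) - y⟫ ≤ 0)
    (x : ℝ → EuclideanSpace ℝ (Fin m))
    (hx : ∀ s ≥ (0 : ℝ), HasDerivAt x (u (σ (x s)) - x s) s) :
    ∀ s ≥ (0 : ℝ), ‖x s - y‖ ≤ Real.exp (-s) * ‖x 0 - y‖ := by
  have hdiss : ∀ s ≥ (0 : ℝ), ⟪x s - y, u (σ (x s)) - x s⟫ ≤ -1 * ‖x s - y‖ ^ 2 := by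
    intro s _
    have hsplit : u (σ (x s)) - x s = (u (σ (x s)) - y) - (x s - y) := by abel
    rw [hsplit, inner_sub_right, real_inner_self_eq_norm_sq]
    linarith [hσ (x s)]
  simpa using norm_le_exp_mul_norm_of_inner_deriv_le (fun s hs => (hx s hs).sub_const y) hdiss

/-- Rescaled microscopic dynamics: exponential convergence of the average payoff
to the target under the supporting-hyperplane feedback strategy. -/
theorem microscopic_dynamics_converges
    {m : ℕ} (A : Type*) [Fintype A] [Nonempty A]
    (q : A → ℝ) (hq : q ∈ stdSimplex ℝ A)
    (M : A → A → EuclideanSpace ℝ (Fin m))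
    (u : A → EuclideanSpace ℝ (Fin m)) (hu : ∀ l, u l = ∑ k, q k • M l k)
    (y : EuclideanSpace ℝ (Fin m)) (hy : y ∈ convexHull ℝ (Set.range u))
    (σ : EuclideanSpace ℝ (Fin m) → A)
    (hσ : ∀ x : EuclideanSpace ℝ (Fin m), ⟪x - y, u (σ x) - y⟫ ≤ 0)
    (x : ℝ → EuclideanSpace ℝ (Fin m))
    (hx : ∀ s ≥ (0 : ℝ), HasDerivAt x (u (σ (x s)) - x s) s) :
    ∀ s ≥ (0 : ℝ), ‖x s - y‖ ≤ Real.exp (-s) * ‖x 0 - y‖ :=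
  microscopic_dynamics_converges_general A u y σ hσ x hx
end

section
/- Let x : [t₀, ∞) → ℝᵐ (t₀ > 0) be differentiable with x′(t) = (1/t)(c(t) − x(t)) where c(t) ∈ ℝᵐ satisfies ⟨x(t) − y, c(t) − y⟩ ≤ 0 for all t. Then t ↦ t·‖x(t) − y‖ is nonincreasing; in particular ‖x(t) − y‖ ≤ (t₀/t)‖x(t₀) − y‖, so x(t) → y as t → ∞. -/
/-!
Write `e(t) = x(t) - y`. Along the dynamics, `d/dt (t² ‖e‖²) = 2t ‖e‖² + 2t ⟪e, c - x⟫ = 2t ⟪e, c - y⟫`,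
which is `≤ 0` by the supporting hyperplane condition. Hence `t ‖x(t) - y‖` is nonincreasing, which
gives the `1/t` rate and the convergence.
-/

open scoped RealInnerProductSpace

open Filter Set

section AveragedDynamics

variable {E : Type*} [NormedAddCommGroup E] [InnerProductSpace ℝ E]

theorem hasDerivAt_sq_mul_norm_sub_sq_of_averaged {x : ℝ → E} {c y : E} {t : ℝ}
    (hx : HasDerivAt x ((1 / t) • (c - x t)) t) :
    HasDerivAt (fun s => s ^ 2 * ‖x s - y‖ ^ 2) (2 * t * ⟪x t - y, c - y⟫) t := by
  have hnorm := (hx.sub_const y).norm_sq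
  refine ((hasDerivAt_pow 2 t).mul hnorm).congr_deriv ?_
  have hsplit : c - x t = (c - y) - (x t - y) := by abel
  rw [real_inner_smul_right, hsplit, inner_sub_right, real_inner_self_eq_norm_sq]
  field_simp
  ring

theorem antitoneOn_mul_norm_sub_of_averaged {x c : ℝ → E} {y : E} {t₀ : ℝ} (ht₀ : 0 < t₀)
    (hx : ∀ t ≥ t₀, HasDerivAt x ((1 / t) • (c t - x t)) t)
    (hH : ∀ t ≥ t₀, ⟪x t - y, c t - y⟫ ≤ 0) :
    AntitoneOn (fun t => t * ‖x t - y‖) (Ici t₀) := by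
  have hderiv : ∀ t ∈ Ici t₀,
      HasDerivAt (fun s => s ^ 2 * ‖x s - y‖ ^ 2) (2 * t * ⟪x t - y, c t - y⟫) t :=
    fun t ht => hasDerivAt_sq_mul_norm_sub_sq_of_averaged (hx t ht)
  have hsq : AntitoneOn (fun t => (t * ‖x t - y‖) ^ 2) (Ici t₀) := by
    simp only [mul_pow]
    refine antitoneOn_of_hasDerivWithinAt_nonpos (convex_Ici t₀)
      (fun t ht => (hderiv t ht).continuousAt.continuousWithinAt)
      (fun t ht => (hderiv t (interior_subset ht)).hasDerivWithinAt) fun t ht => ?_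
    have ht' : t₀ ≤ t := interior_subset (s := Ici t₀) ht
    exact mul_nonpos_of_nonneg_of_nonpos (by linarith) (hH t ht')
  intro t₁ ht₁ t₂ ht₂ h
  exact le_of_sq_le_sq (hsq ht₁ ht₂ h)
    (mul_nonneg (ht₀.le.trans (mem_Ici.mp ht₁)) (norm_nonneg _))

end AveragedDynamics

theorem tendsto_of_norm_sub_le_const_div {F : Type*} [SeminormedAddCommGroup F] {x : ℝ → F} {y : F}
    {C : ℝ} (h : ∀ᶠ t in atTop, ‖x t - y‖ ≤ C / t) : Tendsto x atTop (nhds y) := by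
  rw [tendsto_iff_norm_sub_tendsto_zero]
  exact squeeze_zero' (Eventually.of_forall fun _ => norm_nonneg _) h
    (tendsto_const_nhds.div_atTop tendsto_id)

theorem averaged_dynamics_approaches_target_general
    {m : ℕ} (t₀ : ℝ) (ht₀ : 0 < t₀) (y : EuclideanSpace ℝ (Fin m))
    (x c : ℝ → EuclideanSpace ℝ (Fin m))
    (hx : ∀ t ≥ t₀, HasDerivAt x ((1 / t) • (c t - x t)) t)
    (hH : ∀ t ≥ t₀, ⟪x t - y, c t - y⟫ ≤ 0) :
    (∀ t₁ t₂, t₀ ≤ t₁ → t₁ ≤ t₂ → t₂ * ‖x t₂ - y‖ ≤ t₁ * ‖x t₁ - y‖) ∧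
    (∀ t ≥ t₀, ‖x t - y‖ ≤ (t₀ / t) * ‖x t₀ - y‖) ∧
    Filter.Tendsto x Filter.atTop (nhds y) := by
  have hanti := antitoneOn_mul_norm_sub_of_averaged ht₀ hx hH
  have hmono : ∀ t₁ t₂, t₀ ≤ t₁ → t₁ ≤ t₂ → t₂ * ‖x t₂ - y‖ ≤ t₁ * ‖x t₁ - y‖ :=
    fun t₁ t₂ h₁ h₂ => hanti (mem_Ici.mpr h₁) (mem_Ici.mpr (h₁.trans h₂)) h₂
  have hrate : ∀ t ≥ t₀, ‖x t - y‖ ≤ (t₀ * ‖x t₀ - y‖) / t := fun t ht => by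
    rw [le_div_iff₀ (ht₀.trans_le ht), mul_comm]
    exact hmono t₀ t le_rfl ht
  refine ⟨hmono, fun t ht => ?_, tendsto_of_norm_sub_le_const_div (eventually_ge_atTop t₀ |>.mono hrate)⟩
  rw [div_mul_eq_mul_div]
  exact hrate t ht

/-- Time-averaged payoff dynamics: `t ↦ t‖x(t)-y‖` is nonincreasing, giving
1st-moment approachability of the singleton target `y` at rate `1/t`. -/
theorem averaged_dynamics_approaches_target
    {m : ℕ} (t₀ : ℝ) (ht₀ : 0 < t₀) (y : EuclideanSpace ℝ (Fin m))
    (x c : ℝ → EuclideanSpace ℝ (Fin m)) (hc : Continuous c)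
    (hx : ∀ t ≥ t₀, HasDerivAt x ((1 / t) • (c t - x t)) t)
    (hH : ∀ t ≥ t₀, ⟪x t - y, c t - y⟫ ≤ 0) :
    (∀ t₁ t₂, t₀ ≤ t₁ → t₁ ≤ t₂ → t₂ * ‖x t₂ - y‖ ≤ t₁ * ‖x t₁ - y‖) ∧
    (∀ t ≥ t₀, ‖x t - y‖ ≤ (t₀ / t) * ‖x t₀ - y‖) ∧
    Filter.Tendsto x Filter.atTop (nhds y) :=
  averaged_dynamics_approaches_target_general t₀ ht₀ y x c hx hH
end
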